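/- Let 0 < β < 1, t₀ > 0 and 0 < δ < 1/2. If s₁ < −(2/β)·artanh( tan(πβ(1 − 2δ)/2) / tan(πβ/2) ) + ln t₀, then ∫_{-∞}^{s₁} f_RQ(s) ds < δ. -/

import Mathlib

/-!
The RQ density has the elementary antiderivative
`G(s) = arctan (tan (βπ/2) · tanh (β(s - ln t₀)/2)) / (βπ)`, which tends to `-1/2` at `-∞`.
As the density is nonnegative, the mass of `(-∞, s₁]` is `1/2 + G(s₁)`. Inverting `G` through
`artanh` and `arctan ∘ tan` turns the hypothesis on `s₁` into `G(s₁) < δ - 1/2`.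
-/

open MeasureTheory Real

/-- The Cole–Cole (RQ) distribution of relaxation times in the variable `s = ln t`. -/
noncomputable def fRQ (β t₀ : ℝ) (s : ℝ) : ℝ :=
  Real.sin (β * π) / (2 * π * (Real.cosh (β * (s - Real.log t₀)) + Real.cos (β * π)))

/-- The inverse hyperbolic tangent. -/
noncomputable def artanh (x : ℝ) : ℝ := (1 / 2) * Real.log ((1 + x) / (1 - x))

open Filter Set Topology

theorem MeasureTheory.integral_Iic_of_hasDerivAt_of_nonneg {g g' : ℝ → ℝ} {a l : ℝ}
    (hderiv : ∀ x ∈ Iic a, HasDerivAt g (g' x) x) (g'pos : ∀ x ∈ Iio a, 0 ≤ g' x)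
    (hg : Tendsto g atBot (𝓝 l)) : ∫ x in Iic a, g' x = g a - l := by
  have hderiv_refl : ∀ x ∈ Ici (-a), HasDerivAt (fun x ↦ -g (-x)) (g' (-x)) x := fun x hx ↦ by
    have h := ((hderiv (-x) (neg_le.mp hx : -x ≤ a)).comp x (hasDerivAt_neg x)).neg
    rw [mul_neg_one, neg_neg] at h
    exact h
  have hg_refl : Tendsto (fun x ↦ -g (-x)) atTop (𝓝 (-l)) :=
    (hg.comp tendsto_neg_atTop_atBot).neg
  rw [← neg_neg a, ← integral_comp_neg_Ioi, integral_Ioi_of_hasDerivAt_of_nonneg' hderiv_refl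
    (fun x hx ↦ g'pos (-x) (neg_lt.mp hx : -x < a)) hg_refl]
  simp only [neg_neg]
  ring

namespace Real

theorem tanh_eq_exp_two_mul (x : ℝ) : tanh x = (exp (2 * x) - 1) / (exp (2 * x) + 1) := by
  rw [tanh_eq, two_mul, exp_add, exp_neg]
  field_simp

theorem tendsto_tanh_atBot : Tendsto tanh atBot (𝓝 (-1)) := by
  have hexp : Tendsto (fun x ↦ exp (2 * x)) atBot (𝓝 0) :=
    tendsto_exp_atBot.comp (tendsto_id.const_mul_atBot two_pos)
  have := (hexp.sub_const 1).div (hexp.add_const 1) (by norm_num)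
  simp only [zero_sub, zero_add, div_one] at this
  exact this.congr fun x ↦ (tanh_eq_exp_two_mul x).symm

theorem hasDerivAt_tanh (x : ℝ) : HasDerivAt tanh (cosh x ^ 2)⁻¹ x := by
  have h := (hasDerivAt_sinh x).div (hasDerivAt_cosh x) (cosh_pos x).ne'
  rw [← sq, ← sq, cosh_sq_sub_sinh_sq, one_div] at h
  rwa [show sinh / cosh = tanh from funext fun y ↦ (tanh_eq_sinh_div_cosh y).symm] at h

theorem lt_tanh_iff_artanh_lt {x r : ℝ} (hr : r ∈ Ioo (-1) 1) : r < tanh x ↔ artanh r < x := by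
  rw [← artanh_lt_artanh_iff hr ⟨neg_one_lt_tanh x, tanh_lt_one x⟩, artanh_tanh]

end Real

theorem fRQ_eq_half_angle (β t₀ s : ℝ) :
    fRQ β t₀ s = sin (β * π / 2) * cos (β * π / 2) /
      (2 * π * (cos (β * π / 2) ^ 2 * cosh (β * (s - log t₀) / 2) ^ 2 +
        sin (β * π / 2) ^ 2 * sinh (β * (s - log t₀) / 2) ^ 2)) := by
  set θ := β * π / 2
  set x := β * (s - log t₀) / 2
  have hθ : β * π = 2 * θ := by ring
  have hx : β * (s - log t₀) = 2 * x := by ring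
  have hden : cosh x ^ 2 + sinh x ^ 2 + (2 * cos θ ^ 2 - 1) =
      2 * (cos θ ^ 2 * cosh x ^ 2 + sin θ ^ 2 * sinh x ^ 2) := by
    linear_combination (1 - 2 * cos θ ^ 2) * cosh_sq x - 2 * sinh x ^ 2 * sin_sq_add_cos_sq θ
  rw [fRQ, hθ, hx, sin_two_mul, cos_two_mul, cosh_two_mul, hden, mul_assoc 2,
    mul_left_comm (2 * π) 2, mul_div_mul_left _ _ two_ne_zero]

noncomputable def fRQPrimitive (β t₀ s : ℝ) : ℝ :=
  arctan (tan (β * π / 2) * tanh (β * (s - log t₀) / 2)) / (β * π)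

theorem hasDerivAt_fRQPrimitive {β : ℝ} (hβ : β ≠ 0) (hcos : cos (β * π / 2) ≠ 0) (t₀ s : ℝ) :
    HasDerivAt (fRQPrimitive β t₀) (fRQ β t₀ s) s := by
  have hx : HasDerivAt (fun s ↦ β * (s - log t₀) / 2) (β / 2) s := by
    simpa using (((hasDerivAt_id s).sub_const (log t₀)).const_mul β).div_const 2
  have h := ((((hasDerivAt_tanh _).comp s hx).const_mul (tan (β * π / 2))).arctan).div_const (β * π)
  refine h.congr_deriv ?_
  rw [fRQ_eq_half_angle, Function.comp_apply, tan_eq_sin_div_cos, tanh_eq_sinh_div_cosh]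
  have hcosh := cosh_pos (β * (s - log t₀) / 2)
  have hπ := pi_pos
  field_simp

theorem fRQ_nonneg {β : ℝ} (hβ₀ : 0 ≤ β) (hβ₁ : β ≤ 1) (t₀ s : ℝ) : 0 ≤ fRQ β t₀ s := by
  have hθ : β * π / 2 ∈ Icc (-(π / 2)) (π / 2) := ⟨by nlinarith [pi_pos], by nlinarith [pi_pos]⟩
  rw [fRQ_eq_half_angle]
  have := sin_nonneg_of_nonneg_of_le_pi (by positivity) (by nlinarith [pi_pos] : β * π / 2 ≤ π)
  have := cos_nonneg_of_mem_Icc hθ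
  positivity

theorem tendsto_fRQPrimitive_atBot {β : ℝ} (hβ₀ : 0 < β) (hβ₁ : β < 1) (t₀ : ℝ) :
    Tendsto (fRQPrimitive β t₀) atBot (𝓝 (-(1 / 2))) := by
  have hx : Tendsto (fun s ↦ β * (s - log t₀) / 2) atBot atBot :=
    ((tendsto_atBot_add_const_right _ _ tendsto_id).const_mul_atBot hβ₀).atBot_div_const two_pos
  have h := ((continuous_arctan.tendsto _).comp
    ((tendsto_tanh_atBot.comp hx).const_mul (tan (β * π / 2)))).div_const (β * π)
  have hlim : arctan (tan (β * π / 2) * -1) / (β * π) = -(1 / 2) := by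
    rw [mul_neg_one, ← tan_neg, arctan_tan (by nlinarith [pi_pos]) (by nlinarith [pi_pos])]
    field_simp [pi_pos.ne']
  rwa [hlim] at h

theorem integral_Iic_fRQ {β : ℝ} (hβ₀ : 0 < β) (hβ₁ : β < 1) (t₀ a : ℝ) :
    ∫ s in Iic a, fRQ β t₀ s = 1 / 2 + fRQPrimitive β t₀ a := by
  have hcos : cos (β * π / 2) ≠ 0 :=
    (cos_pos_of_mem_Ioo ⟨by nlinarith [pi_pos], by nlinarith [pi_pos]⟩).ne'
  rw [integral_Iic_of_hasDerivAt_of_nonneg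
    (fun s _ ↦ hasDerivAt_fRQPrimitive hβ₀.ne' hcos t₀ s)
    (fun s _ ↦ fRQ_nonneg hβ₀.le hβ₁.le t₀ s) (tendsto_fRQPrimitive_atBot hβ₀ hβ₁ t₀)]
  ring

theorem fRQPrimitive_lt_of_lt {β φ t₀ s : ℝ} (hβ₀ : 0 < β) (hβ₁ : β < 1)
    (hφ : φ ∈ Ioo (-(β * π / 2)) (β * π / 2))
    (hs : s < -(2 / β) * _root_.artanh (tan φ / tan (β * π / 2)) + log t₀) :
    fRQPrimitive β t₀ s < -φ / (β * π) := by
  have hθ : β * π / 2 ∈ Ioo (-(π / 2)) (π / 2) := ⟨by nlinarith [pi_pos], by nlinarith [pi_pos]⟩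
  have hφ' : φ ∈ Ioo (-(π / 2)) (π / 2) := ⟨by linarith [hφ.1, hθ.2], by linarith [hφ.2, hθ.2]⟩
  set a := tan (β * π / 2)
  have ha : 0 < a := tan_pos_of_pos_of_lt_pi_div_two (by positivity) hθ.2
  have hr : tan φ / a ∈ Ioo (-1) 1 := by
    have hlo : tan (-(β * π / 2)) < tan φ :=
      strictMonoOn_tan ⟨by linarith [hθ.2], by linarith [hθ.1]⟩ hφ' hφ.1
    have hhi : tan φ < a := strictMonoOn_tan hφ' hθ hφ.2
    rw [tan_neg] at hlo
    exact ⟨by rw [lt_div_iff₀ ha]; linarith, (div_lt_one ha).2 hhi⟩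
  have hx : Real.artanh (tan φ / a) < -(β * (s - log t₀) / 2) := by
    -- on `[-1, 1]` the `artanh` of the statement is Mathlib's `Real.artanh`
    rw [_root_.artanh, ← artanh_eq_half_log (Ioo_subset_Icc_self hr)] at hs
    calc Real.artanh (tan φ / a) = -(β * (-(2 / β) * Real.artanh (tan φ / a)) / 2) := by
          field_simp
      _ < -(β * (s - log t₀) / 2) := by gcongr; linarith
  set x := β * (s - log t₀) / 2
  have htanh : a * tanh x < -tan φ := by
    have h := (lt_tanh_iff_artanh_lt hr).2 hx
    rw [tanh_neg, lt_neg, ← mul_lt_mul_iff_right₀ ha, mul_neg, mul_div_cancel₀ _ ha.ne'] at h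
    exact h
  have harctan : arctan (a * tanh x) < -φ := by
    calc arctan (a * tanh x) < arctan (tan (-φ)) := by rw [tan_neg]; exact arctan_strictMono htanh
      _ = -φ := arctan_tan (by linarith [hφ'.2]) (by linarith [hφ'.1])
  exact div_lt_div_of_pos_right harctan (by positivity)

theorem fRQ_lower_truncation_small_general (β t₀ δ s₁ : ℝ) (hβ₀ : 0 < β) (hβ₁ : β < 1)
    (hδ₀ : 0 < δ) (hδ₁ : δ < 1 / 2)
    (hs₁ : s₁ < -(2 / β) * _root_.artanh (Real.tan (π * β * (1 - 2 * δ) / 2) /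
      Real.tan (π * β / 2)) + Real.log t₀) :
    ∫ s in Set.Iic s₁, fRQ β t₀ s < δ := by
  rw [mul_comm π β] at hs₁
  have hβπ : 0 < β * π := mul_pos hβ₀ pi_pos
  have hφ : β * π * (1 - 2 * δ) / 2 ∈ Ioo (-(β * π / 2)) (β * π / 2) :=
    ⟨by nlinarith, by nlinarith⟩
  have hcdf : -(β * π * (1 - 2 * δ) / 2) / (β * π) = δ - 1 / 2 := by field_simp; ring
  rw [integral_Iic_fRQ hβ₀ hβ₁]
  linarith [fRQPrimitive_lt_of_lt hβ₀ hβ₁ hφ hs₁]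

/-- **Sufficient condition for a small lower truncation error of the RQ distribution.**
For `0 < β < 1`, `t₀ > 0`, `0 < δ < 1/2`, if
`s₁ < −(2/β) artanh(tan(πβ(1 − 2δ)/2)/tan(πβ/2)) + ln t₀` then
`∫_{-∞}^{s₁} f_RQ(s) ds < δ`. -/
theorem fRQ_lower_truncation_small (β t₀ δ s₁ : ℝ) (hβ₀ : 0 < β) (hβ₁ : β < 1)
    (ht₀ : 0 < t₀) (hδ₀ : 0 < δ) (hδ₁ : δ < 1 / 2)
    (hs₁ : s₁ < -(2 / β) * _root_.artanh (Real.tan (π * β * (1 - 2 * δ) / 2) /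
      Real.tan (π * β / 2)) + Real.log t₀) :
    ∫ s in Set.Iic s₁, fRQ β t₀ s < δ :=
  fRQ_lower_truncation_small_general β t₀ δ s₁ hβ₀ hβ₁ hδ₀ hδ₁ hs₁
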